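/- arXiv:2008.07460 — 4 statements merged into one kernel-verified Lean document; each statement's English description precedes it below -/
import Mathlib

section
/- Let (X, ≼) be a countable dense unbounded linear order, and let P be the set of finite partial functions p from X to ℚ such that x ≺ y implies p(x) < p(y) for all x, y in dom(p), ordered by reverse inclusion. Then for every x ∈ X, the set { p ∈ P : x ∈ dom(p) } is dense in P. -/
/-! A condition `p` whose domain misses `x` is extended by `(x, a)`, where `a` is a rational
lying above the finitely many values `p` takes below `x` and below those it takes above `x`;
such an `a` exists because `ℚ` is dense and has no endpoints. -/

/-- A condition: finite partial strictly order-preserving function from `X` to `ℚ`,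
viewed as a set of pairs. -/
def IsOrderCond {X : Type*} [LinearOrder X] (p : Set (X × ℚ)) : Prop :=
  p.Finite ∧ (∀ ⦃x : X⦄ ⦃a a' : ℚ⦄, (x, a) ∈ p → (x, a') ∈ p → a = a') ∧
    ∀ ⦃x y : X⦄ ⦃a b : ℚ⦄, (x, a) ∈ p → (y, b) ∈ p → x < y → a < b

namespace IsOrderCond

variable {X : Type*} [LinearOrder X] {p : Set (X × ℚ)}

lemma exists_value_between (hp : IsOrderCond p) (x : X) :
    ∃ a : ℚ, (∀ ⦃y b⦄, (y, b) ∈ p → y < x → b < a) ∧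
      ∀ ⦃y b⦄, (y, b) ∈ p → x < y → a < b := by
  obtain ⟨hfin, -, hmono⟩ := hp
  have hbelow : (Prod.snd '' {z ∈ p | z.1 < x}).Finite := (hfin.subset fun _ h ↦ h.1).image _
  have habove : (Prod.snd '' {z ∈ p | x < z.1}).Finite := (hfin.subset fun _ h ↦ h.1).image _
  obtain ⟨a, hlt, hgt⟩ := hbelow.exists_between' habove <| by
    rintro _ ⟨⟨y, b⟩, ⟨hyb, hyx⟩, rfl⟩ _ ⟨⟨z, c⟩, ⟨hzc, hxz⟩, rfl⟩
    exact hmono hyb hzc (hyx.trans hxz)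
  exact ⟨a, fun y b hyb hyx ↦ hlt b ⟨(y, b), ⟨hyb, hyx⟩, rfl⟩,
    fun y b hyb hxy ↦ hgt b ⟨(y, b), ⟨hyb, hxy⟩, rfl⟩⟩

lemma insert_of_between (hp : IsOrderCond p) {x : X} (hx : ∀ a, (x, a) ∉ p) {a : ℚ}
    (hlt : ∀ ⦃y b⦄, (y, b) ∈ p → y < x → b < a)
    (hgt : ∀ ⦃y b⦄, (y, b) ∈ p → x < y → a < b) :
    IsOrderCond (insert (x, a) p) := by
  obtain ⟨hfin, hfun, hmono⟩ := hp
  refine ⟨hfin.insert _, ?_, ?_⟩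
  · rintro y b b' (hb | hb) (hb' | hb')
    · simp_all
    · simp only [Prod.mk.injEq] at hb
      exact absurd (hb.1 ▸ hb') (hx b')
    · simp only [Prod.mk.injEq] at hb'
      exact absurd (hb'.1 ▸ hb) (hx b)
    · exact hfun hb hb'
  · rintro y z b c (hb | hb) (hc | hc) hyz
    · simp_all
    · simp only [Prod.mk.injEq] at hb
      exact hb.2 ▸ hgt hc (hb.1 ▸ hyz)
    · simp only [Prod.mk.injEq] at hc
      exact hc.2 ▸ hlt hb (hc.1 ▸ hyz)
    · exact hmono hb hc hyz

end IsOrderCond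

theorem dense_dom_mem_orderCond_general {X : Type*} [LinearOrder X] (x : X) :
    ∀ p : Set (X × ℚ), IsOrderCond p →
      ∃ q : Set (X × ℚ), IsOrderCond q ∧ p ⊆ q ∧ ∃ a : ℚ, (x, a) ∈ q := by
  intro p hp
  by_cases hx : ∃ a : ℚ, (x, a) ∈ p
  · exact ⟨p, hp, subset_rfl, hx⟩
  simp only [not_exists] at hx
  obtain ⟨a, hlt, hgt⟩ := hp.exists_value_between x
  exact ⟨insert (x, a) p, hp.insert_of_between hx hlt hgt, Set.subset_insert _ _, a,
    Set.mem_insert _ _⟩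

/-- For a countable dense unbounded linear order `X`, the set of conditions whose
domain contains `x` is dense in the poset of conditions (ordered by reverse
inclusion). -/
theorem dense_dom_mem_orderCond {X : Type*} [LinearOrder X] [Countable X]
    [DenselyOrdered X] [NoMinOrder X] [NoMaxOrder X] (x : X) :
    ∀ p : Set (X × ℚ), IsOrderCond p →
      ∃ q : Set (X × ℚ), IsOrderCond q ∧ p ⊆ q ∧ ∃ a : ℚ, (x, a) ∈ q :=
  dense_dom_mem_orderCond_general x
end

section
/- Let C ⊆ C₀ and D ⊆ D₀ be Boolean subalgebras, u ∈ C₀, w ∈ D₀, and h : C → D a Boolean isomorphism such that for all x ∈ C: x ≤ u' iff h(x) ≤ w', and x ≤ u iff h(x) ≤ w. Then there exists a Boolean isomorphism H : C(u) → D(w) extending h with H(u) = w. -/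
/-- `C` is a Boolean subalgebra of the ambient Boolean algebra, viewed as a set. -/
def IsBoolSubalg {A : Type*} [BooleanAlgebra A] (C : Set A) : Prop :=
  (⊥ : A) ∈ C ∧ (⊤ : A) ∈ C ∧ (∀ a ∈ C, ∀ b ∈ C, a ⊔ b ∈ C) ∧
    (∀ a ∈ C, ∀ b ∈ C, a ⊓ b ∈ C) ∧ (∀ a ∈ C, aᶜ ∈ C)

/-- The smallest Boolean subalgebra containing a set `S`. -/
def boolSubalgClosure {A : Type*} [BooleanAlgebra A] (S : Set A) : Set A :=
  ⋂₀ {T : Set A | IsBoolSubalg T ∧ S ⊆ T}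

/-- `h` is a Boolean isomorphism from the subalgebra `C` onto the subalgebra `D`. -/
def IsBoolIsoOn {A B : Type*} [BooleanAlgebra A] [BooleanAlgebra B]
    (h : A → B) (C : Set A) (D : Set B) : Prop :=
  Set.BijOn h C D ∧ (∀ a ∈ C, ∀ b ∈ C, h (a ⊔ b) = h a ⊔ h b) ∧
    (∀ a ∈ C, ∀ b ∈ C, h (a ⊓ b) = h a ⊓ h b) ∧ (∀ a ∈ C, h aᶜ = (h a)ᶜ)

/-!
Every element of `C(u)` is `(a ⊓ u) ⊔ (b ⊓ uᶜ)` for some `a, b ∈ C`, and this representation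
is unique up to the values of `a ⊓ u` and `b ⊓ uᶜ`. Now `a ⊓ u = a' ⊓ u` says exactly that
`a \ a' ≤ uᶜ` and `a' \ a ≤ uᶜ`, conditions on elements of `C` which the hypotheses transfer
through `h` to the same conditions for `w` (and likewise for `uᶜ` and `wᶜ`). Hence
`H ((a ⊓ u) ⊔ (b ⊓ uᶜ)) := (h a ⊓ w) ⊔ (h b ⊓ wᶜ)` is well defined and injective, and it is a
homomorphism because the representations combine componentwise.
-/

def boolIte {A : Type*} [BooleanAlgebra A] (u a b : A) : A := (a ⊓ u) ⊔ (b ⊓ uᶜ)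

section BoolIte

variable {A : Type*} [BooleanAlgebra A] (u a b c d : A)

theorem boolIte_sup : boolIte u a b ⊔ boolIte u c d = boolIte u (a ⊔ c) (b ⊔ d) := by
  simp only [boolIte, inf_sup_right]; ac_rfl

theorem boolIte_inf : boolIte u a b ⊓ boolIte u c d = boolIte u (a ⊓ c) (b ⊓ d) := by
  simp only [boolIte, inf_sup_right, inf_sup_left]
  rw [inf_inf_inf_comm a u c u, inf_inf_inf_comm a u d uᶜ, inf_inf_inf_comm b uᶜ c u,
    inf_inf_inf_comm b uᶜ d uᶜ]
  simp

theorem boolIte_compl : (boolIte u a b)ᶜ = boolIte u aᶜ bᶜ := by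
  refine compl_unique ?_ ?_
  · rw [boolIte_inf]; simp [boolIte]
  · rw [boolIte_sup]; simp [boolIte]

@[simp] theorem boolIte_self : boolIte u a a = a := by
  rw [boolIte, ← inf_sup_left, sup_compl_eq_top, inf_top_eq]

@[simp] theorem boolIte_top_bot : boolIte u ⊤ ⊥ = u := by simp [boolIte]

theorem boolIte_inf_self : boolIte u a b ⊓ u = a ⊓ u := by
  simp [boolIte, inf_sup_right, inf_assoc]

theorem boolIte_inf_compl : boolIte u a b ⊓ uᶜ = b ⊓ uᶜ := by
  simp [boolIte, inf_sup_right, inf_assoc]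

variable {u a b c d}

theorem boolIte_eq_boolIte_iff :
    boolIte u a b = boolIte u c d ↔ a ⊓ u = c ⊓ u ∧ b ⊓ uᶜ = d ⊓ uᶜ := by
  refine ⟨fun h => ⟨?_, ?_⟩, fun ⟨hac, hbd⟩ => by rw [boolIte, boolIte, hac, hbd]⟩
  · rw [← boolIte_inf_self u a b, h, boolIte_inf_self]
  · rw [← boolIte_inf_compl u a b, h, boolIte_inf_compl]

theorem inf_le_iff_sdiff_le_compl : a ⊓ u ≤ b ↔ a \ b ≤ uᶜ := by
  rw [sdiff_le_iff, ← sdiff_le_iff', sdiff_compl]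

theorem inf_eq_inf_iff_sdiff_le_compl : a ⊓ u = b ⊓ u ↔ a \ b ≤ uᶜ ∧ b \ a ≤ uᶜ := by
  rw [← inf_le_iff_sdiff_le_compl, ← inf_le_iff_sdiff_le_compl, le_antisymm_iff,
    le_inf_iff, le_inf_iff]
  simp

end BoolIte

section Subalgebra

variable {A : Type*} [BooleanAlgebra A] {C T : Set A}

theorem IsBoolSubalg.boolIte_mem (hT : IsBoolSubalg T) {u a b : A} (hu : u ∈ T) (ha : a ∈ T)
    (hb : b ∈ T) : boolIte u a b ∈ T :=
  hT.2.2.1 _ (hT.2.2.2.1 a ha u hu) _ (hT.2.2.2.1 b hb uᶜ (hT.2.2.2.2 u hu))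

theorem IsBoolSubalg.sdiff_mem (hC : IsBoolSubalg C) {a b : A} (ha : a ∈ C) (hb : b ∈ C) :
    a \ b ∈ C := by
  rw [sdiff_eq]
  exact hC.2.2.2.1 a ha _ (hC.2.2.2.2 b hb)

theorem IsBoolSubalg.image2_boolIte (hC : IsBoolSubalg C) (u : A) :
    IsBoolSubalg (Set.image2 (boolIte u) C C) := by
  obtain ⟨hbot, htop, hsup, hinf, hcompl⟩ := hC
  refine ⟨⟨⊥, hbot, ⊥, hbot, boolIte_self u ⊥⟩, ⟨⊤, htop, ⊤, htop, boolIte_self u ⊤⟩, ?_, ?_, ?_⟩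
  · rintro _ ⟨a, ha, b, hb, rfl⟩ _ ⟨c, hc, d, hd, rfl⟩
    exact ⟨_, hsup a ha c hc, _, hsup b hb d hd, (boolIte_sup u a b c d).symm⟩
  · rintro _ ⟨a, ha, b, hb, rfl⟩ _ ⟨c, hc, d, hd, rfl⟩
    exact ⟨_, hinf a ha c hc, _, hinf b hb d hd, (boolIte_inf u a b c d).symm⟩
  · rintro _ ⟨a, ha, b, hb, rfl⟩
    exact ⟨_, hcompl a ha, _, hcompl b hb, (boolIte_compl u a b).symm⟩

theorem IsBoolSubalg.boolSubalgClosure_union_singleton (hC : IsBoolSubalg C) (u : A) :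
    boolSubalgClosure (C ∪ {u}) = Set.image2 (boolIte u) C C := by
  refine subset_antisymm (Set.sInter_subset_of_mem ⟨hC.image2_boolIte u, ?_⟩) ?_
  · rintro x (hx | rfl)
    · exact ⟨x, hx, x, hx, boolIte_self u x⟩
    · exact ⟨⊤, hC.2.1, ⊥, hC.1, boolIte_top_bot x⟩
  · rintro _ ⟨a, ha, b, hb, rfl⟩ T ⟨hT, hCT⟩
    exact hT.boolIte_mem (hCT (Or.inr rfl)) (hCT (Or.inl ha)) (hCT (Or.inl hb))

end Subalgebra

namespace IsBoolIsoOn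

variable {A B : Type*} [BooleanAlgebra A] [BooleanAlgebra B] {C : Set A} {D : Set B}
  {h : A → B}

theorem map_bot (hh : IsBoolIsoOn h C D) (hC : IsBoolSubalg C) : h ⊥ = ⊥ := by
  have := hh.2.2.1 ⊥ hC.1 ⊥ᶜ (hC.2.2.2.2 ⊥ hC.1)
  rwa [inf_compl_eq_bot, hh.2.2.2 ⊥ hC.1, inf_compl_eq_bot] at this

theorem map_top (hh : IsBoolIsoOn h C D) (hC : IsBoolSubalg C) : h ⊤ = ⊤ := by
  rw [← compl_bot, hh.2.2.2 ⊥ hC.1, hh.map_bot hC, compl_bot]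

theorem map_sdiff (hh : IsBoolIsoOn h C D) (hC : IsBoolSubalg C) {a b : A} (ha : a ∈ C)
    (hb : b ∈ C) : h (a \ b) = h a \ h b := by
  rw [sdiff_eq, sdiff_eq, hh.2.2.1 a ha bᶜ (hC.2.2.2.2 b hb), hh.2.2.2 b hb]

theorem inf_eq_inf_iff (hh : IsBoolIsoOn h C D) (hC : IsBoolSubalg C) {u : A} {w : B}
    (huw : ∀ x ∈ C, x ≤ uᶜ ↔ h x ≤ wᶜ) {a b : A} (ha : a ∈ C) (hb : b ∈ C) :
    a ⊓ u = b ⊓ u ↔ h a ⊓ w = h b ⊓ w := by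
  rw [inf_eq_inf_iff_sdiff_le_compl, inf_eq_inf_iff_sdiff_le_compl, ← hh.map_sdiff hC ha hb,
    ← hh.map_sdiff hC hb ha, huw _ (hC.sdiff_mem ha hb), huw _ (hC.sdiff_mem hb ha)]

theorem boolIte_eq_boolIte_iff (hh : IsBoolIsoOn h C D) (hC : IsBoolSubalg C) {u : A} {w : B}
    (h1 : ∀ x ∈ C, x ≤ uᶜ ↔ h x ≤ wᶜ) (h2 : ∀ x ∈ C, x ≤ u ↔ h x ≤ w) {a b c d : A}
    (ha : a ∈ C) (hb : b ∈ C) (hc : c ∈ C) (hd : d ∈ C) :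
    boolIte u a b = boolIte u c d ↔ boolIte w (h a) (h b) = boolIte w (h c) (h d) := by
  have h2' : ∀ x ∈ C, x ≤ uᶜᶜ ↔ h x ≤ wᶜᶜ := by simpa only [compl_compl] using h2
  rw [_root_.boolIte_eq_boolIte_iff, _root_.boolIte_eq_boolIte_iff,
    hh.inf_eq_inf_iff hC h1 ha hc, hh.inf_eq_inf_iff hC h2' hb hd]

theorem image2_boolIte (hh : IsBoolIsoOn h C D) (hC : IsBoolSubalg C) {H : A → B} {u : A}
    {w : B} (hH : ∀ a ∈ C, ∀ b ∈ C, H (boolIte u a b) = boolIte w (h a) (h b))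
    (hinj : ∀ a ∈ C, ∀ b ∈ C, ∀ c ∈ C, ∀ d ∈ C,
      boolIte w (h a) (h b) = boolIte w (h c) (h d) → boolIte u a b = boolIte u c d) :
    IsBoolIsoOn H (Set.image2 (boolIte u) C C) (Set.image2 (boolIte w) D D) := by
  obtain ⟨⟨hmaps, -, hsurj⟩, hsup, hinf, hcompl⟩ := hh
  obtain ⟨-, -, hCsup, hCinf, hCcompl⟩ := hC
  refine ⟨⟨?_, ?_, ?_⟩, ?_, ?_, ?_⟩
  · rintro _ ⟨a, ha, b, hb, rfl⟩
    exact ⟨h a, hmaps ha, h b, hmaps hb, (hH a ha b hb).symm⟩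
  · rintro _ ⟨a, ha, b, hb, rfl⟩ _ ⟨c, hc, d, hd, rfl⟩ hHx
    rw [hH a ha b hb, hH c hc d hd] at hHx
    exact hinj a ha b hb c hc d hd hHx
  · rintro _ ⟨c, hc, d, hd, rfl⟩
    obtain ⟨a, ha, rfl⟩ := hsurj hc
    obtain ⟨b, hb, rfl⟩ := hsurj hd
    exact ⟨boolIte u a b, ⟨a, ha, b, hb, rfl⟩, hH a ha b hb⟩
  · rintro _ ⟨a, ha, b, hb, rfl⟩ _ ⟨c, hc, d, hd, rfl⟩
    rw [boolIte_sup, hH _ (hCsup a ha c hc) _ (hCsup b hb d hd), hH a ha b hb, hH c hc d hd,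
      hsup a ha c hc, hsup b hb d hd, boolIte_sup]
  · rintro _ ⟨a, ha, b, hb, rfl⟩ _ ⟨c, hc, d, hd, rfl⟩
    rw [boolIte_inf, hH _ (hCinf a ha c hc) _ (hCinf b hb d hd), hH a ha b hb, hH c hc d hd,
      hinf a ha c hc, hinf b hb d hd, boolIte_inf]
  · rintro _ ⟨a, ha, b, hb, rfl⟩
    rw [boolIte_compl, hH _ (hCcompl a ha) _ (hCcompl b hb), hH a ha b hb, hcompl a ha,
      hcompl b hb, boolIte_compl]

end IsBoolIsoOn

/-- Extension lemma: if a Boolean isomorphism `h : C → D` satisfies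
`x ≤ u' ↔ h x ≤ w'` and `x ≤ u ↔ h x ≤ w` for all `x ∈ C`, then it extends to a
Boolean isomorphism `H : C(u) → D(w)` with `H u = w`. -/
theorem extension_lemma {A B : Type*} [BooleanAlgebra A] [BooleanAlgebra B]
    {C : Set A} {D : Set B} (hC : IsBoolSubalg C) (hD : IsBoolSubalg D)
    (u : A) (w : B) (h : A → B) (hiso : IsBoolIsoOn h C D)
    (h1 : ∀ x ∈ C, x ≤ uᶜ ↔ h x ≤ wᶜ)
    (h2 : ∀ x ∈ C, x ≤ u ↔ h x ≤ w) :
    ∃ H : A → B,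
      IsBoolIsoOn H (boolSubalgClosure (C ∪ {u})) (boolSubalgClosure (D ∪ {w})) ∧
      Set.EqOn H h C ∧ H u = w := by
  rw [hC.boolSubalgClosure_union_singleton, hD.boolSubalgClosure_union_singleton]
  have hrep {a b c d : A} (ha : a ∈ C) (hb : b ∈ C) (hc : c ∈ C) (hd : d ∈ C) :=
    hiso.boolIte_eq_boolIte_iff hC h1 h2 ha hb hc hd
  let H := Function.extend (fun p : ↥(C ×ˢ C) => boolIte u p.1.1 p.1.2)
    (fun p => boolIte w (h p.1.1) (h p.1.2)) fun _ => ⊥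
  have hH : ∀ a ∈ C, ∀ b ∈ C, H (boolIte u a b) = boolIte w (h a) (h b) := fun a ha b hb =>
    Function.FactorsThrough.extend_apply
      (fun (p q : ↥(C ×ˢ C)) hpq => (hrep p.2.1 p.2.2 q.2.1 q.2.2).1 hpq) _ ⟨(a, b), ha, hb⟩
  refine ⟨H, hiso.image2_boolIte hC hH fun a ha b hb c hc d hd => (hrep ha hb hc hd).2,
    fun a ha => ?_, ?_⟩
  · simpa using hH a ha a ha
  · simpa [hiso.map_top hC, hiso.map_bot hC] using hH ⊤ hC.2.1 ⊥ hC.1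
end

section
/- Any two countable, nontrivial, atomless Boolean algebras are isomorphic. -/
/-!
Back and forth through finite partitions. A partition of `⊤ : A × B` into pairs `(p, q)` with
`p ≠ ⊥` and `q ≠ ⊥` matches a finite partition of `A` with one of `B`, and the elements of `A × B`
that are unions of its parts form the graph of an isomorphism between the finite subalgebras the
two partitions generate. Refining the partition only enlarges this graph. If `B` is atomless, any
`a : A` is brought into its domain by splitting every part `(p, q)` that `a` cuts into
`(p ⊓ a, c)` and `(p \ a, q \ c)` for some `⊥ < c < q`. Alternating between `A` and `B` along
enumerations gives an increasing chain of graphs whose union is the graph of an isomorphism.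
-/

namespace Finpartition

variable {α : Type*}

section Lattice

variable [Lattice α] [OrderBot α] {a : α}

/-- For a partition of `⊤`, the `x` with this property are exactly the suprema of sets of parts. -/
def IsUnionOfParts (P : Finpartition a) (x : α) : Prop :=
  ∀ p ∈ P.parts, p ≤ x ∨ Disjoint p x

variable {P Q : Finpartition a} {x y : α}

theorem IsUnionOfParts.of_le (hQP : Q ≤ P) (hx : P.IsUnionOfParts x) : Q.IsUnionOfParts x := by
  intro q hq
  obtain ⟨p, hp, hqp⟩ := hQP hq
  exact (hx p hp).imp hqp.trans fun h => h.mono_left hqp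

theorem isUnionOfParts_map_iff {β : Type*} [Lattice β] [OrderBot β] (e : α ≃o β) :
    (P.map e).IsUnionOfParts (e x) ↔ P.IsUnionOfParts x := by
  simp only [IsUnionOfParts, parts_map, Finset.forall_mem_map]
  simp

theorem IsUnionOfParts.inf (hx : P.IsUnionOfParts x) (hy : P.IsUnionOfParts y) :
    P.IsUnionOfParts (x ⊓ y) := by
  intro p hp
  rcases hx p hp with hpx | hpx
  · exact (hy p hp).imp (le_inf hpx) fun h => h.mono_right inf_le_right
  · exact Or.inr (hpx.mono_right inf_le_left)

end Lattice

section DistribLattice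

variable [DistribLattice α] [OrderBot α] {a : α} {P : Finpartition a} {x y : α}

theorem IsUnionOfParts.sup (hx : P.IsUnionOfParts x) (hy : P.IsUnionOfParts y) :
    P.IsUnionOfParts (x ⊔ y) := by
  intro p hp
  rcases hx p hp with hpx | hpx
  · exact Or.inl (le_sup_of_le_left hpx)
  · exact (hy p hp).imp le_sup_of_le_right fun h => disjoint_sup_right.2 ⟨hpx, h⟩

end DistribLattice

theorem IsUnionOfParts.eq_bot_of_forall_not_le [DistribLattice α] [BoundedOrder α]
    {P : Finpartition (⊤ : α)} {x : α} (hx : P.IsUnionOfParts x) (h : ∀ p ∈ P.parts, ¬p ≤ x) :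
    x = ⊥ := by
  have : Disjoint (P.parts.sup id) x :=
    Finset.disjoint_sup_left.2 fun p hp => (hx p hp).resolve_left (h p hp)
  rwa [P.sup_parts, top_disjoint] at this

theorem IsUnionOfParts.compl [BooleanAlgebra α] {a x : α} {P : Finpartition a}
    (hx : P.IsUnionOfParts x) : P.IsUnionOfParts xᶜ :=
  fun p hp => (hx p hp).symm.imp le_compl_iff_disjoint_right.2 disjoint_compl_right_iff.2

section Prod

variable {A B : Type*}

theorem exists_isUnionOfParts_mk [Lattice A] [OrderBot A] [DistribLattice B] [OrderBot B]
    {c : A × B} {P : Finpartition c} {a : A} (h : ∀ p ∈ P.parts, p.1 ≤ a ∨ Disjoint p.1 a) :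
    ∃ b, P.IsUnionOfParts (a, b) := by
  classical
  refine ⟨(P.parts.filter (·.1 ≤ a)).sup Prod.snd, fun p hp => ?_⟩
  by_cases hpa : p.1 ≤ a
  · exact Or.inl ⟨hpa, Finset.le_sup (f := Prod.snd) (Finset.mem_filter.2 ⟨hp, hpa⟩)⟩
  refine Or.inr (Prod.disjoint_iff.2 ⟨(h p hp).resolve_left hpa, Finset.disjoint_sup_right.2 ?_⟩)
  intro q hq
  rw [Finset.mem_filter] at hq
  exact (Prod.disjoint_iff.1 (P.disjoint hp hq.1 (by rintro rfl; exact hpa hq.2))).2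

theorem snd_le_of_isUnionOfParts [BooleanAlgebra A] [BooleanAlgebra B]
    {P : Finpartition (⊤ : A × B)} (hP : ∀ p ∈ P.parts, p.1 ≠ ⊥) {a : A} {b b' : B}
    (h : P.IsUnionOfParts (a, b)) (h' : P.IsUnionOfParts (a, b')) : b ≤ b' := by
  have hunion : P.IsUnionOfParts (⊥, b \ b') := by
    have hx : (a, b) ⊓ (a, b')ᶜ = (⊥, b \ b') := by ext <;> simp [sdiff_eq]
    exact hx ▸ h.inf h'.compl
  have := hunion.eq_bot_of_forall_not_le fun p hp hle => hP p hp (le_bot_iff.1 hle.1)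
  exact sdiff_eq_bot_iff.1 (congrArg Prod.snd this)

end Prod

end Finpartition

open Finpartition

theorem nonempty_equiv_of_graph {A B : Type*} [BooleanAlgebra A] [BooleanAlgebra B]
    {R : Set (A × B)}
    (sup_mem : ∀ x ∈ R, ∀ y ∈ R, x ⊔ y ∈ R) (inf_mem : ∀ x ∈ R, ∀ y ∈ R, x ⊓ y ∈ R)
    (compl_mem : ∀ x ∈ R, xᶜ ∈ R) (hfst : ∀ a, ∃! b, (a, b) ∈ R) (hsnd : ∀ b, ∃! a, (a, b) ∈ R) :
    Nonempty {f : A ≃ B // ∀ x y : A, f (x ⊔ y) = f x ⊔ f y ∧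
      f (x ⊓ y) = f x ⊓ f y ∧ f xᶜ = (f x)ᶜ} := by
  choose f hf hf_unique using hfst
  choose g hg hg_unique using hsnd
  refine ⟨⟨⟨f, g, fun a => (hg_unique _ a (hf a)).symm, fun b => (hf_unique _ b (hg b)).symm⟩,
    fun x y => ⟨?_, ?_, ?_⟩⟩⟩
  · exact (hf_unique _ _ (sup_mem _ (hf x) _ (hf y))).symm
  · exact (hf_unique _ _ (inf_mem _ (hf x) _ (hf y))).symm
  · exact (hf_unique _ _ (compl_mem _ (hf x))).symm

structure FinPartialIso (A B : Type*) [BooleanAlgebra A] [BooleanAlgebra B] where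
  toFinpartition : Finpartition (⊤ : A × B)
  fst_ne_bot : ∀ p ∈ toFinpartition.parts, p.1 ≠ ⊥
  snd_ne_bot : ∀ p ∈ toFinpartition.parts, p.2 ≠ ⊥

namespace FinPartialIso

variable {A B : Type*} [BooleanAlgebra A] [BooleanAlgebra B]

def graph (P : FinPartialIso A B) : Set (A × B) := {x | P.toFinpartition.IsUnionOfParts x}

instance [Nontrivial A] [Nontrivial B] : Inhabited (FinPartialIso A B) where
  default :=
    { toFinpartition := indiscrete top_ne_bot
      fst_ne_bot := by simp
      snd_ne_bot := by simp }

def symm (P : FinPartialIso A B) : FinPartialIso B A where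
  toFinpartition := P.toFinpartition.map OrderIso.prodComm
  fst_ne_bot p hp := P.snd_ne_bot p.swap (Finset.mem_map_equiv.1 hp)
  snd_ne_bot p hp := P.fst_ne_bot p.swap (Finset.mem_map_equiv.1 hp)

variable {P : FinPartialIso A B}

theorem mem_graph_symm {x : B × A} : x ∈ P.symm.graph ↔ x.swap ∈ P.graph :=
  isUnionOfParts_map_iff (x := x.swap) OrderIso.prodComm

theorem snd_eq_of_mem_graph {a : A} {b b' : B} (h : (a, b) ∈ P.graph) (h' : (a, b') ∈ P.graph) :
    b = b' :=
  (snd_le_of_isUnionOfParts P.fst_ne_bot h h').antisymm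
    (snd_le_of_isUnionOfParts P.fst_ne_bot h' h)

theorem fst_eq_of_mem_graph {a a' : A} {b : B} (h : (a, b) ∈ P.graph) (h' : (a', b) ∈ P.graph) :
    a = a' :=
  snd_eq_of_mem_graph (P := P.symm) (mem_graph_symm.2 h) (mem_graph_symm.2 h')

theorem exists_finpartition_fst_le_or_disjoint (hB : ∀ b : B, ¬IsAtom b) (a : A) {p : A × B}
    (h1 : p.1 ≠ ⊥) (h2 : p.2 ≠ ⊥) :
    ∃ R : Finpartition p, ∀ q ∈ R.parts, q.1 ≠ ⊥ ∧ q.2 ≠ ⊥ ∧ (q.1 ≤ a ∨ Disjoint q.1 a) := by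
  classical
  by_cases hp : p.1 ≤ a ∨ Disjoint p.1 a
  · refine ⟨indiscrete fun h => h1 (congrArg Prod.fst h), ?_⟩
    simp only [indiscrete_parts, Finset.mem_singleton]
    rintro q rfl
    exact ⟨h1, h2, hp⟩
  push Not at hp
  obtain ⟨c, hc, hc0⟩ : ∃ c < p.2, c ≠ ⊥ := by
    simpa [IsAtom, h2] using hB p.2
  have hx1 : p.1 ⊓ a ≠ ⊥ := fun h => hp.2 (disjoint_iff.2 h)
  have hy1 : p.1 \ a ≠ ⊥ := fun h => hp.1 (sdiff_eq_bot_iff.1 h)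
  have hy2 : p.2 \ c ≠ ⊥ := fun h => hc.not_ge (sdiff_eq_bot_iff.1 h)
  have hxy : Disjoint (p.1 ⊓ a, c) (p.1 \ a, p.2 \ c) :=
    Prod.disjoint_iff.2
      ⟨disjoint_sdiff_self_right.mono_left inf_le_right, disjoint_sdiff_self_right⟩
  have hsup : (p.1 ⊓ a, c) ⊔ (p.1 \ a, p.2 \ c) = p :=
    Prod.ext (sup_inf_sdiff _ _) (sup_sdiff_cancel_right hc.le)
  refine ⟨(indiscrete fun h => hx1 (congrArg Prod.fst h)).extend
    (fun h => hy1 (congrArg Prod.fst h)) hxy hsup, ?_⟩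
  simp only [extend_parts, indiscrete_parts, Finset.mem_insert, Finset.mem_singleton]
  rintro q (rfl | rfl)
  · exact ⟨hy1, hy2, Or.inr disjoint_sdiff_self_left⟩
  · exact ⟨hx1, hc0, Or.inl inf_le_right⟩

theorem exists_graph_superset_fst_mem (hB : ∀ b : B, ¬IsAtom b) (P : FinPartialIso A B) (a : A) :
    ∃ Q : FinPartialIso A B, P.graph ⊆ Q.graph ∧ ∃ b, (a, b) ∈ Q.graph := by
  classical
  choose R hR using fun p (hp : p ∈ P.toFinpartition.parts) =>
    exists_finpartition_fst_le_or_disjoint hB a (P.fst_ne_bot p hp) (P.snd_ne_bot p hp)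
  have hQ : ∀ q ∈ (P.toFinpartition.bind R).parts,
      q.1 ≠ ⊥ ∧ q.2 ≠ ⊥ ∧ (q.1 ≤ a ∨ Disjoint q.1 a) := by
    intro q hq
    obtain ⟨p, hp, hq⟩ := mem_bind.1 hq
    exact hR p hp q hq
  have hle : P.toFinpartition.bind R ≤ P.toFinpartition := by
    intro q hq
    obtain ⟨p, hp, hq⟩ := mem_bind.1 hq
    exact ⟨p, hp, (R p hp).le hq⟩
  exact ⟨⟨_, fun q hq => (hQ q hq).1, fun q hq => (hQ q hq).2.1⟩, fun x hx => hx.of_le hle,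
    exists_isUnionOfParts_mk fun q hq => (hQ q hq).2.2⟩

theorem exists_graph_superset_snd_mem (hA : ∀ a : A, ¬IsAtom a) (P : FinPartialIso A B) (b : B) :
    ∃ Q : FinPartialIso A B, P.graph ⊆ Q.graph ∧ ∃ a, (a, b) ∈ Q.graph := by
  obtain ⟨Q, hPQ, a, ha⟩ := exists_graph_superset_fst_mem hA P.symm b
  exact ⟨Q.symm, fun x hx => mem_graph_symm.2 (hPQ (mem_graph_symm.2 hx)), a, mem_graph_symm.2 ha⟩

theorem exists_graph_superset (hA : ∀ a : A, ¬IsAtom a) (hB : ∀ b : B, ¬IsAtom b)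
    (P : FinPartialIso A B) (a : A) (b : B) :
    ∃ Q : FinPartialIso A B, P.graph ⊆ Q.graph ∧ (∃ b', (a, b') ∈ Q.graph) ∧
      ∃ a', (a', b) ∈ Q.graph := by
  obtain ⟨Q, hPQ, b', hb'⟩ := exists_graph_superset_fst_mem hB P a
  obtain ⟨R, hQR, a', ha'⟩ := exists_graph_superset_snd_mem hA Q b
  exact ⟨R, hPQ.trans hQR, ⟨b', hQR hb'⟩, a', ha'⟩

theorem exists_monotone_graph [Countable A] [Countable B] [Nontrivial A] [Nontrivial B]
    (hA : ∀ a : A, ¬IsAtom a) (hB : ∀ b : B, ¬IsAtom b) :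
    ∃ P : ℕ → FinPartialIso A B, Monotone (fun n => (P n).graph) ∧
      (∀ a, ∃ n b, (a, b) ∈ (P n).graph) ∧ ∀ b, ∃ n a, (a, b) ∈ (P n).graph := by
  obtain ⟨eA, heA⟩ := exists_surjective_nat A
  obtain ⟨eB, heB⟩ := exists_surjective_nat B
  choose step hstep hfst hsnd using fun n (P : FinPartialIso A B) =>
    exists_graph_superset hA hB P (eA n) (eB n)
  let P : ℕ → FinPartialIso A B := fun n => Nat.rec default step n
  refine ⟨P, monotone_nat_of_le_succ fun n => hstep n (P n), fun a => ?_, fun b => ?_⟩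
  · obtain ⟨n, rfl⟩ := heA a
    exact ⟨n + 1, hfst n (P n)⟩
  · obtain ⟨n, rfl⟩ := heB b
    exact ⟨n + 1, hsnd n (P n)⟩

theorem nonempty_equiv_of_monotone_graph (P : ℕ → FinPartialIso A B)
    (hP : Monotone fun n => (P n).graph) (hfst : ∀ a, ∃ n b, (a, b) ∈ (P n).graph)
    (hsnd : ∀ b, ∃ n a, (a, b) ∈ (P n).graph) :
    Nonempty {f : A ≃ B // ∀ x y : A, f (x ⊔ y) = f x ⊔ f y ∧
      f (x ⊓ y) = f x ⊓ f y ∧ f xᶜ = (f x)ᶜ} := by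
  have common : ∀ x ∈ ⋃ n, (P n).graph, ∀ y ∈ ⋃ n, (P n).graph,
      ∃ n, x ∈ (P n).graph ∧ y ∈ (P n).graph := by
    simp only [Set.mem_iUnion]
    rintro x ⟨m, hx⟩ y ⟨n, hy⟩
    exact ⟨max m n, hP (le_max_left m n) hx, hP (le_max_right m n) hy⟩
  refine nonempty_equiv_of_graph (R := ⋃ n, (P n).graph) ?_ ?_ ?_ (fun a => ?_) (fun b => ?_)
  · intro x hx y hy
    obtain ⟨n, hx, hy⟩ := common x hx y hy
    exact Set.mem_iUnion.2 ⟨n, hx.sup hy⟩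
  · intro x hx y hy
    obtain ⟨n, hx, hy⟩ := common x hx y hy
    exact Set.mem_iUnion.2 ⟨n, hx.inf hy⟩
  · intro x hx
    obtain ⟨n, hx⟩ := Set.mem_iUnion.1 hx
    exact Set.mem_iUnion.2 ⟨n, hx.compl⟩
  · obtain ⟨n, b, hb⟩ := hfst a
    refine ⟨b, Set.mem_iUnion.2 ⟨n, hb⟩, fun b' hb' => ?_⟩
    obtain ⟨m, hb', hb⟩ := common _ hb' _ (Set.mem_iUnion.2 ⟨n, hb⟩)
    exact snd_eq_of_mem_graph hb' hb
  · obtain ⟨n, a, ha⟩ := hsnd b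
    refine ⟨a, Set.mem_iUnion.2 ⟨n, ha⟩, fun a' ha' => ?_⟩
    obtain ⟨m, ha', ha⟩ := common _ ha' _ (Set.mem_iUnion.2 ⟨n, ha⟩)
    exact fst_eq_of_mem_graph ha' ha

end FinPartialIso

/-- Any two countable nontrivial atomless Boolean algebras are isomorphic. -/
theorem countable_atomless_boolean_algebras_iso
    {A B : Type*} [BooleanAlgebra A] [BooleanAlgebra B]
    [Countable A] [Countable B] [Nontrivial A] [Nontrivial B]
    (hA : ∀ a : A, ¬IsAtom a) (hB : ∀ b : B, ¬IsAtom b) :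
    Nonempty {f : A ≃ B // ∀ x y : A, f (x ⊔ y) = f x ⊔ f y ∧
      f (x ⊓ y) = f x ⊓ f y ∧ f xᶜ = (f x)ᶜ} := by
  obtain ⟨P, hP, hfst, hsnd⟩ := FinPartialIso.exists_monotone_graph hA hB
  exact FinPartialIso.nonempty_equiv_of_monotone_graph P hP hfst hsnd
end

section
/- Any two countable graphs satisfying the extension property are isomorphic. -/
/-!
Back and forth. Finite partial isomorphisms between `G` and `H`, ordered by inclusion, can
always be extended to a new vertex of `V` by the extension property of `H`, and, symmetrically,
to a new vertex of `W` by that of `G`. Since `V ⊕ W` is countable, some ideal of partial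
isomorphisms meets all of these cofinal families, and the union of that ideal is an isomorphism.
-/

/-- A graph has the extension property if for any finite disjoint vertex sets
`A`, `B` there is a vertex outside `A ∪ B` adjacent to everything in `A` and to
nothing in `B`. -/
def SimpleGraph.ExtensionProperty {V : Type*} (G : SimpleGraph V) : Prop :=
  ∀ A B : Finset V, Disjoint A B →
    ∃ v : V, v ∉ A ∧ v ∉ B ∧ (∀ a ∈ A, G.Adj v a) ∧ ∀ b ∈ B, ¬G.Adj v b

namespace SimpleGraph

variable {V W : Type*} {G : SimpleGraph V} {H : SimpleGraph W}

variable (G H) in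
/-- Finite partial isomorphisms, encoded by their graphs. -/
abbrev PartialIso : Type _ :=
  {f : Finset (V × W) //
    ∀ p ∈ f, ∀ q ∈ f, (p.1 = q.1 ↔ p.2 = q.2) ∧ (G.Adj p.1 q.1 ↔ H.Adj p.2 q.2)}

namespace PartialIso

instance : Inhabited (PartialIso G H) := ⟨⟨∅, by simp⟩⟩

protected def symm (f : PartialIso G H) : PartialIso H G :=
  ⟨f.1.map (Equiv.prodComm V W).toEmbedding, fun p hp q hq => by
    rw [Finset.mem_map_equiv] at hp hq
    have h := f.2 _ hp _ hq
    exact ⟨h.1.symm, h.2.symm⟩⟩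

lemma mem_symm {f : PartialIso G H} {v : V} {w : W} : (w, v) ∈ f.symm.1 ↔ (v, w) ∈ f.1 :=
  Finset.mem_map_equiv

lemma exists_across (hH : H.ExtensionProperty) (f : PartialIso G H) (v : V) :
    ∃ w : W, ∀ p ∈ f.1, (p.1 = v ↔ p.2 = w) ∧ (G.Adj p.1 v ↔ H.Adj p.2 w) := by
  classical
  by_cases hv : ∃ w, (v, w) ∈ f.1
  · obtain ⟨w, hw⟩ := hv
    exact ⟨w, fun p hp => f.2 p hp (v, w) hw⟩
  push Not at hv
  set A := (f.1.filter fun p => G.Adj p.1 v).image Prod.snd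
  set B := (f.1.filter fun p => ¬G.Adj p.1 v).image Prod.snd
  have hAB : Disjoint A B := by
    simp only [A, B, Finset.disjoint_left, Finset.mem_image, Finset.mem_filter]
    rintro _ ⟨p, ⟨hp, hpv⟩, rfl⟩ ⟨q, ⟨hq, hqv⟩, hqp⟩
    exact hqv ((f.2 q hq p hp).1.2 hqp ▸ hpv)
  obtain ⟨w, hwA, hwB, hadjA, hadjB⟩ := hH A B hAB
  refine ⟨w, fun p hp => ?_⟩
  have hpv : p.1 ≠ v := fun h => hv p.2 (h ▸ hp)
  by_cases hadj : G.Adj p.1 v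
  · have hpA : p.2 ∈ A := Finset.mem_image_of_mem _ (Finset.mem_filter.2 ⟨hp, hadj⟩)
    exact ⟨iff_of_false hpv (ne_of_mem_of_not_mem hpA hwA),
      iff_of_true hadj (hadjA _ hpA).symm⟩
  · have hpB : p.2 ∈ B := Finset.mem_image_of_mem _ (Finset.mem_filter.2 ⟨hp, hadj⟩)
    exact ⟨iff_of_false hpv (ne_of_mem_of_not_mem hpB hwB),
      iff_of_false hadj fun h => hadjB _ hpB h.symm⟩

variable (G) in
def definedAtLeft (hH : H.ExtensionProperty) (v : V) : Order.Cofinal (PartialIso G H) where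
  carrier := {f | ∃ w, (v, w) ∈ f.1}
  isCofinal f := by
    classical
    obtain ⟨w, hw⟩ := exists_across hH f v
    refine ⟨⟨insert (v, w) f.1, fun p hp q hq => ?_⟩, ⟨w, Finset.mem_insert_self _ _⟩,
      Finset.subset_insert _ _⟩
    rw [Finset.mem_insert] at hp hq
    rcases hp with rfl | hp <;> rcases hq with rfl | hq
    · simp
    · have h := hw q hq
      exact ⟨eq_comm.trans (h.1.trans eq_comm),
        (G.adj_comm _ _).trans (h.2.trans (H.adj_comm _ _))⟩
    · exact hw p hp
    · exact f.2 p hp q hq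

variable (H) in
def definedAtRight (hG : G.ExtensionProperty) (w : W) : Order.Cofinal (PartialIso G H) where
  carrier := {f | ∃ v, (v, w) ∈ f.1}
  isCofinal f := by
    obtain ⟨g, ⟨v, hv⟩, hfg⟩ := (definedAtLeft H hG w).isCofinal f.symm
    refine ⟨g.symm, ⟨v, mem_symm.2 hv⟩, fun p hp => ?_⟩
    exact mem_symm.2 (hfg (mem_symm.2 hp))

lemma nonempty_iso_of_ideal (I : Order.Ideal (PartialIso G H))
    (hV : ∀ v, ∃ f ∈ I, ∃ w, (v, w) ∈ f.1) (hW : ∀ w, ∃ f ∈ I, ∃ v, (v, w) ∈ f.1) :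
    Nonempty (G ≃g H) := by
  have compat {f g : PartialIso G H} (hf : f ∈ I) (hg : g ∈ I) {p q : V × W} (hp : p ∈ f.1)
      (hq : q ∈ g.1) : (p.1 = q.1 ↔ p.2 = q.2) ∧ (G.Adj p.1 q.1 ↔ H.Adj p.2 q.2) := by
    obtain ⟨m, -, hfm, hgm⟩ := I.directed _ hf _ hg
    exact m.2 p (hfm hp) q (hgm hq)
  choose fV hfV φ hφ using hV
  choose fW hfW ψ hψ using hW
  exact ⟨⟨⟨φ, ψ, fun v => (compat (hfW (φ v)) (hfV v) (hψ (φ v)) (hφ v)).1.2 rfl,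
    fun w => (compat (hfV (ψ w)) (hfW w) (hφ (ψ w)) (hψ w)).1.1 rfl⟩,
    fun {a b} => (compat (hfV a) (hfV b) (hφ a) (hφ b)).2.symm⟩⟩

end PartialIso

end SimpleGraph

open SimpleGraph

/-- Any two countable graphs with the extension property are isomorphic. -/
theorem iso_of_extensionProperty {V W : Type*} [Countable V] [Countable W]
    (G : SimpleGraph V) (H : SimpleGraph W)
    (hG : G.ExtensionProperty) (hH : H.ExtensionProperty) :
    Nonempty (G ≃g H) := by
  cases nonempty_encodable V
  cases nonempty_encodable W
  let 𝒟 : V ⊕ W → Order.Cofinal (PartialIso G H) :=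
    Sum.elim (PartialIso.definedAtLeft G hH) (PartialIso.definedAtRight H hG)
  refine PartialIso.nonempty_iso_of_ideal (Order.idealOfCofinals default 𝒟)
    (fun v => ?_) (fun w => ?_)
  · obtain ⟨f, hf, hfI⟩ := Order.cofinal_meets_idealOfCofinals default 𝒟 (.inl v)
    exact ⟨f, hfI, hf⟩
  · obtain ⟨f, hf, hfI⟩ := Order.cofinal_meets_idealOfCofinals default 𝒟 (.inr w)
    exact ⟨f, hfI, hf⟩
end
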